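/- arXiv:1009.1798 — 2 statements merged into one kernel-verified Lean document; each statement's English description precedes it below -/
import Mathlib

section
/- Let A be a finite abelian group, χ: A × A → S¹ a symmetric bilinear form, and μ a quadratic map associated with χ. Then |A|·|A⊥|·|γ(μ)|² = |A| · ∑_{a ∈ A⊥} μ(a), where γ(μ) = |A|^{-1/2}|A⊥|^{-1/2} ∑_{a∈A} μ(a) and A⊥ is the annihilator of χ. Equivalently, |∑_{a∈A} μ(a)|² = |A| · ∑_{a ∈ A⊥} μ(a). -/
/-!
Expand `|∑ μ|² = ∑_{a,b} μ a · conj (μ b)` and substitute `a = b + c`: since `|μ b| = 1`, the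
quadratic relation gives `μ (b + c) · conj (μ b) = χ b c · μ c`, so `|∑ μ|² = ∑_c (∑_b χ b c) μ c`.
The inner sum is a character sum of `b ↦ χ b c`, equal to `|A|` when `c ∈ A⊥` and to `0` otherwise.
-/

open Finset ComplexConjugate

theorem Fintype.sum_eq_zero_of_map_add_eq_mul {A R : Type*} [AddGroup A] [Fintype A]
    [Ring R] [NoZeroDivisors R] {f : A → R} (hf : ∀ a b, f (a + b) = f a * f b)
    {b : A} (hb : f b ≠ 1) : ∑ a, f a = 0 := by
  have hshift : f b * ∑ a, f a = ∑ a, f a := by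
    rw [mul_sum]
    exact Fintype.sum_equiv (Equiv.addLeft b) _ _ fun a => (hf b a).symm
  have : (f b - 1) * ∑ a, f a = 0 := by rw [sub_mul, one_mul, hshift, sub_self]
  exact (mul_eq_zero.mp this).resolve_left (sub_ne_zero.mpr hb)

theorem apply_zero_left_eq_one {A R : Type*} [AddGroup A] [MonoidWithZero R]
    [IsLeftCancelMulZero R] {χ : A → A → R} (hχ_bil : ∀ a b c, χ (a + b) c = χ a c * χ b c)
    {b : A} (hb : χ 0 b ≠ 0) : χ 0 b = 1 :=
  (mul_eq_left₀ hb).mp (by rw [← hχ_bil, add_zero])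

theorem sum_apply_left_eq_ite {A R : Type*} [AddGroup A] [Fintype A] [Ring R] [NoZeroDivisors R]
    {χ : A → A → R} (hχ_symm : ∀ a b, χ a b = χ b a)
    (hχ_bil : ∀ a b c, χ (a + b) c = χ a c * χ b c) (c : A) [Decidable (∀ b, χ c b = 1)] :
    ∑ b, χ b c = if ∀ b, χ c b = 1 then (Fintype.card A : R) else 0 := by
  split_ifs with hc
  · simp [hχ_symm _ c, hc]
  · push Not at hc
    obtain ⟨b, hb⟩ := hc
    exact Fintype.sum_eq_zero_of_map_add_eq_mul (fun a a' => hχ_bil a a' c) (hχ_symm b c ▸ hb)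

section
variable {A : Type*} [AddGroup A] [Fintype A] {χ : A → A → ℂ} {μ : A → ℂ}

theorem sum_mul_conj_sum_eq_sum_sum_mul (hμ_unit : ∀ a, ‖μ a‖ = 1)
    (hμ : ∀ a b, μ (a + b) = χ a b * μ a * μ b) :
    (∑ a, μ a) * conj (∑ a, μ a) = ∑ c, (∑ b, χ b c) * μ c := by
  have hshift (b : A) : ∑ a, μ a * conj (μ b) = ∑ c, χ b c * μ c := by
    refine (Fintype.sum_equiv (Equiv.addLeft b) _ _ fun c => ?_).symm
    rw [Equiv.coe_addLeft, hμ, mul_right_comm _ (μ b), mul_assoc, Complex.mul_conj', hμ_unit]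
    simp
  rw [map_sum, sum_mul_sum, sum_comm]
  simp_rw [hshift, sum_mul]
  exact sum_comm

theorem norm_sum_sq_eq_card_mul_sum_filter (hχ_symm : ∀ a b, χ a b = χ b a)
    (hχ_bil : ∀ a b c, χ (a + b) c = χ a c * χ b c) (hμ_unit : ∀ a, ‖μ a‖ = 1)
    (hμ : ∀ a b, μ (a + b) = χ a b * μ a * μ b) [DecidablePred fun c : A => ∀ b, χ c b = 1] :
    (‖∑ a, μ a‖ : ℂ) ^ 2 = Fintype.card A * ∑ c with ∀ b, χ c b = 1, μ c := by
  rw [← Complex.mul_conj', sum_mul_conj_sum_eq_sum_sum_mul hμ_unit hμ, mul_sum, sum_filter]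
  refine sum_congr rfl fun c _ => ?_
  rw [sum_apply_left_eq_ite hχ_symm hχ_bil]
  split_ifs <;> simp

end

theorem Complex.natCast_mul_natCast_mul_norm_inv_sqrt_mul_sq {m n : ℕ} (hm : m ≠ 0) (hn : n ≠ 0)
    (z : ℂ) :
    (m : ℂ) * n * (‖((√m : ℝ) : ℂ)⁻¹ * ((√n : ℝ) : ℂ)⁻¹ * z‖ : ℂ) ^ 2 = (‖z‖ : ℂ) ^ 2 := by
  simp only [norm_mul, norm_inv, Complex.norm_real, Real.norm_eq_abs,
    abs_of_nonneg (Real.sqrt_nonneg _)]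
  push_cast
  rw [mul_pow, mul_pow, inv_pow, inv_pow, ← Complex.ofReal_pow, ← Complex.ofReal_pow,
    Real.sq_sqrt (Nat.cast_nonneg m), Real.sq_sqrt (Nat.cast_nonneg n)]
  push_cast
  field_simp

/-- For a quadratic map `μ` associated with a symmetric bilinear form `χ`
on a finite abelian group `A`, one has `|A|·|A⊥|·|γ(μ)|² = |A| · ∑_{a ∈ A⊥} μ a`, where
`γ(μ) = |A|^{-1/2}|A⊥|^{-1/2} ∑_{a∈A} μ a`; equivalently
`|∑_{a∈A} μ a|² = |A| · ∑_{a ∈ A⊥} μ a`. -/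
theorem gauss_sum_abs_sq
    {A : Type*} [AddCommGroup A] [Fintype A]
    (χ : A → A → ℂ) (μ : A → ℂ)
    (hχ_unit : ∀ a b, ‖χ a b‖ = 1)
    (hχ_symm : ∀ a b, χ a b = χ b a)
    (hχ_bil : ∀ a b c, χ (a + b) c = χ a c * χ b c)
    (hμ_unit : ∀ a, ‖μ a‖ = 1)
    (hμ : ∀ a b, μ (a + b) = χ a b * μ a * μ b) :
    ((Fintype.card A : ℂ) * (Nat.card {a : A // ∀ b, χ a b = 1} : ℂ) *
        (‖((Real.sqrt (Fintype.card A) : ℂ))⁻¹ *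
          ((Real.sqrt (Nat.card {a : A // ∀ b, χ a b = 1}) : ℂ))⁻¹ *
          (∑ a : A, μ a)‖)^2
      = (Fintype.card A : ℂ) * ∑ᶠ a ∈ {a : A | ∀ b, χ a b = 1}, μ a) ∧
    ((‖∑ a : A, μ a‖ : ℂ)^2
      = (Fintype.card A : ℂ) * ∑ᶠ a ∈ {a : A | ∀ b, χ a b = 1}, μ a) := by
  classical
  have hzero_mem : ∀ b, χ 0 b = 1 := fun b =>
    apply_zero_left_eq_one hχ_bil (norm_ne_zero_iff.mp (by simp [hχ_unit]))
  have hradical_card : Nat.card {a : A // ∀ b, χ a b = 1} ≠ 0 :=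
    Nat.card_ne_zero.mpr ⟨⟨⟨0, hzero_mem⟩⟩, inferInstance⟩
  have hsum : (‖∑ a, μ a‖ : ℂ) ^ 2
      = Fintype.card A * ∑ᶠ a ∈ {a : A | ∀ b, χ a b = 1}, μ a := by
    rw [finsum_mem_eq_toFinset_sum, Set.toFinset_ofPred]
    exact norm_sum_sq_eq_card_mul_sum_filter hχ_symm hχ_bil hμ_unit hμ
  refine ⟨?_, hsum⟩
  rw [Complex.natCast_mul_natCast_mul_norm_inv_sqrt_mul_sq Fintype.card_ne_zero hradical_card,
    hsum]
end

section
/- Let (A, χ) be a bicharacter pair and k ≥ 1 an integer. Then ζ_k(χ), defined as |A|^{-1/2}|A_k|^{-1/2} ∑_{μ∈Q_χ} γ(μ)^k, is either 0 or an 8-th complex root of unity. -/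
/-- A bicharacter on a finite abelian group: a non-degenerate symmetric bilinear pairing
with values in the unit circle `S¹ ⊂ ℂ`; non-degeneracy means the adjoint map
`A → Hom(A, S¹)` is bijective. -/
def IsBicharacter {A : Type*} [AddCommGroup A] [Fintype A] (χ : A → A → ℂ) : Prop :=
  (∀ a b, ‖χ a b‖ = 1) ∧ (∀ a b, χ a b = χ b a) ∧
  (∀ a b c, χ (a + b) c = χ a c * χ b c) ∧
  Function.Injective (fun a : A => (fun b => χ a b)) ∧
  (∀ f : A → ℂ, (∀ a, ‖f a‖ = 1) → (∀ a b, f (a + b) = f a * f b) →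
    ∃ a : A, f = fun b => χ a b)

/-- The set `Q_χ` of quadratic maps associated with `χ`. -/
def QuadMaps {A : Type*} [AddCommGroup A] [Fintype A] (χ : A → A → ℂ) : Set (A → ℂ) :=
  {μ | (∀ a, ‖μ a‖ = 1) ∧ ∀ a b, μ (a + b) = χ a b * μ a * μ b}

/-- The normalized Gauss sum `γ(μ) = |A|^{-1/2} ∑_a μ a` of a quadratic map associated
with a non-degenerate form (whose annihilator is trivial). -/
noncomputable def gaussSum' {A : Type*} [AddCommGroup A] [Fintype A] (μ : A → ℂ) : ℂ :=
  ((Real.sqrt (Fintype.card A) : ℂ))⁻¹ * ∑ a : A, μ a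

/-- `ζ_k(χ) = |A|^{-1/2} |A_k|^{-1/2} ∑_{μ ∈ Q_χ} γ(μ)^k`, where `A_k = {a | k·a = 0}`. -/
noncomputable def zeta {A : Type*} [AddCommGroup A] [Fintype A]
    (χ : A → A → ℂ) (k : ℕ) : ℂ :=
  ((Real.sqrt (Fintype.card A) : ℂ))⁻¹ *
    ((Real.sqrt (Nat.card {a : A // k • a = 0}) : ℂ))⁻¹ *
    ∑ᶠ μ ∈ QuadMaps χ, (gaussSum' μ) ^ k


/-!
Fix `μ₀ ∈ Q_χ`. By non-degeneracy `Q_χ = {χ(c, ·) μ₀ | c ∈ A}`, and orthogonality of the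
characters `χ(·, b)` turns `∑_μ γ(μ)^k` into `|A|^{1 - k/2} G`, where `G` is the sum of
`F(v) = ∏ᵢ μ₀(vᵢ)` over the group `V` of zero-sum `k`-tuples. On `V` the map `F` is quadratic
(with polar form `∏ᵢ χ(vᵢ, wᵢ)`) and even, and for an even quadratic map on a finite group:

* `|G|² = |V| ∑_{z ∈ rad} F(z)`, and `F` is a character on the radical, so `|G|²` is `0` or
  `|V| |rad|`;
* `G⁴` is real: writing `2|V| - 1 = a² + b² + c² + d²`, the integer quaternion matrix `M` has
  `Mᵀ M = 2|V| - 1 ≡ -1` on `V`, so `x ↦ M x` permutes `V⁴` and turns `∏ F(xᵢ)` into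
  `∏ conj F(xᵢ)`.

Here the radical is the diagonal copy of `A_k` and `|V| = |A|^(k-1)`, so when `G ≠ 0` the
normalisation of `ζ_k` makes `ζ_k⁸ = 1`.
-/

open Finset Complex
open scoped ComplexConjugate Matrix

theorem AddChar.map_sum_eq_prod {A M ι : Type*} [AddCommMonoid A] [CommMonoid M]
    (ψ : AddChar A M) (s : Finset ι) (f : ι → A) : ψ (∑ i ∈ s, f i) = ∏ i ∈ s, ψ (f i) := by
  induction s using Finset.cons_induction with
  | empty => simp
  | cons a s _ ih => rw [sum_cons, prod_cons, AddChar.map_add_eq_mul, ih]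

namespace Matrix

variable {ι : Type*} [Fintype ι]

/-- `M` is left multiplication by the quaternion `a + b i + c j + d k`, of norm `q`. -/
theorem exists_fin_four_transpose_mul_self_eq_natCast (q : ℕ) :
    ∃ M : Matrix (Fin 4) (Fin 4) ℤ, Mᵀ * M = q := by
  obtain ⟨a, b, c, d, h⟩ := Nat.sum_four_squares q
  have h' : (q : ℤ) = a ^ 2 + b ^ 2 + c ^ 2 + d ^ 2 := by exact_mod_cast h.symm
  refine ⟨!![a, -b, -c, -d; b, a, -d, c; c, d, a, -b; d, -c, b, a], ?_⟩
  ext i j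
  fin_cases i <;> fin_cases j <;>
    simp [mul_apply, natCast_apply, Fin.sum_univ_four, h'] <;> ring

theorem sum_mul_eq_ite_of_transpose_mul_self_eq [DecidableEq ι] {M : Matrix ι ι ℤ} {q : ℕ}
    (hM : Mᵀ * M = q) (j l : ι) : ∑ i, M i j * M i l = if j = l then (q : ℤ) else 0 := by
  simpa [mul_apply, natCast_apply] using congrFun (congrFun hM j) l

def intMulVec {W : Type*} [AddCommGroup W] (M : Matrix ι ι ℤ) : (ι → W) →+ (ι → W) where
  toFun x i := ∑ j, M i j • x j
  map_zero' := by ext; simp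
  map_add' x y := by ext; simp [smul_add, sum_add_distrib]

theorem intMulVec_apply {W : Type*} [AddCommGroup W] (M : Matrix ι ι ℤ) (x : ι → W) (i : ι) :
    M.intMulVec x i = ∑ j, M i j • x j :=
  rfl

theorem intMulVec_bijective {W : Type*} [AddCommGroup W] [Finite W] [DecidableEq ι]
    {M : Matrix ι ι ℤ} {q : ℕ} (hM : Mᵀ * M = q) (hq : ∀ x : W, (q + 1) • x = 0) :
    Function.Bijective (M.intMulVec (W := W)) := by
  refine Finite.injective_iff_bijective.1 fun x y hxy => funext fun j => ?_
  have hleft : ∀ x : ι → W, ∑ i, M i j • M.intMulVec x i = -x j := fun x => by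
    simp only [intMulVec_apply, smul_sum, smul_smul]
    rw [sum_comm]
    simp only [← sum_smul, sum_mul_eq_ite_of_transpose_mul_self_eq hM, ite_smul, zero_smul,
      sum_ite_eq, mem_univ, if_true]
    rw [eq_neg_iff_add_eq_zero, ← add_one_zsmul]
    exact_mod_cast hq (x j)
  have h := hleft x
  rw [hxy, hleft y] at h
  exact (neg_inj.1 h).symm

end Matrix

/-- `μ ∈ QuadMaps χ` says exactly `IsQuadraticMap μ χ` when `χ` is a bicharacter. Symmetry and
additivity of `B` in its second argument are consequences (`polar_comm`). -/
structure IsQuadraticMap {W : Type*} [AddCommGroup W] (F : W → ℂ) (B : W → W → ℂ) : Prop where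
  norm_eq_one : ∀ x, ‖F x‖ = 1
  map_add : ∀ x y, F (x + y) = B x y * F x * F y
  map_add_left : ∀ x y z, B (x + y) z = B x z * B y z

namespace IsQuadraticMap

variable {W : Type*} [AddCommGroup W] {F : W → ℂ} {B : W → W → ℂ}

theorem ne_zero (hF : IsQuadraticMap F B) (x : W) : F x ≠ 0 :=
  norm_ne_zero_iff.1 (by simp [hF.norm_eq_one])

theorem conj_eq_inv (hF : IsQuadraticMap F B) (x : W) : conj (F x) = (F x)⁻¹ :=
  (RCLike.inv_eq_conj (hF.norm_eq_one x)).symm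

theorem polar_eq (hF : IsQuadraticMap F B) (x y : W) : B x y = F (x + y) / (F x * F y) := by
  rw [hF.map_add]
  field_simp [hF.ne_zero x, hF.ne_zero y]

theorem polar_ne_zero (hF : IsQuadraticMap F B) (x y : W) : B x y ≠ 0 := by
  rw [hF.polar_eq]
  exact div_ne_zero (hF.ne_zero _) (mul_ne_zero (hF.ne_zero _) (hF.ne_zero _))

theorem polar_comm (hF : IsQuadraticMap F B) (x y : W) : B x y = B y x := by
  rw [hF.polar_eq, hF.polar_eq, add_comm, mul_comm (F x)]

theorem polar_zero_left (hF : IsQuadraticMap F B) (z : W) : B 0 z = 1 := by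
  have h := hF.map_add_left 0 0 z
  rw [add_zero] at h
  exact (mul_eq_left₀ (hF.polar_ne_zero 0 z)).1 h.symm

theorem map_zero (hF : IsQuadraticMap F B) : F 0 = 1 := by
  have h := hF.map_add 0 0
  rw [add_zero, hF.polar_zero_left, one_mul] at h
  exact (mul_eq_left₀ (hF.ne_zero 0)).1 h.symm

def polar (hF : IsQuadraticMap F B) : W →+ AddChar W ℂ where
  toFun z :=
    { toFun := fun x => B x z
      map_zero_eq_one' := hF.polar_zero_left z
      map_add_eq_mul' := fun x y => hF.map_add_left x y z }
  map_zero' := by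
    ext x
    simp only [AddChar.coe_mk, AddChar.zero_apply]
    rw [hF.polar_comm, hF.polar_zero_left]
  map_add' y z := by
    ext x
    simp only [AddChar.coe_mk, AddChar.add_apply]
    rw [hF.polar_comm, hF.map_add_left, hF.polar_comm y, hF.polar_comm z]

@[simp]
theorem polar_apply (hF : IsQuadraticMap F B) (x z : W) : hF.polar z x = B x z :=
  rfl

theorem polar_zsmul_left (hF : IsQuadraticMap F B) (c : ℤ) (x z : W) :
    B (c • x) z = B x z ^ c :=
  (hF.polar z).map_zsmul_eq_zpow c x

theorem polar_neg_left (hF : IsQuadraticMap F B) (x z : W) : B (-x) z = (B x z)⁻¹ :=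
  (hF.polar z).map_neg_eq_inv x

theorem polar_zsmul_zsmul (hF : IsQuadraticMap F B) (a b : ℤ) (x y : W) :
    B (a • x) (b • y) = B ((a * b) • x) y := by
  rw [hF.polar_zsmul_left, hF.polar_comm, hF.polar_zsmul_left, hF.polar_zsmul_left,
    hF.polar_comm, ← zpow_mul, mul_comm]

theorem polar_sum_left (hF : IsQuadraticMap F B) {ι : Type*} (s : Finset ι) (x : ι → W)
    (z : W) : B (∑ j ∈ s, x j) z = ∏ j ∈ s, B (x j) z :=
  (hF.polar z).map_sum_eq_prod s x

theorem polar_sum_sum (hF : IsQuadraticMap F B) {ι : Type*} (s : Finset ι) (x y : ι → W) :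
    B (∑ j ∈ s, x j) (∑ l ∈ s, y l) = ∏ j ∈ s, ∏ l ∈ s, B (x j) (y l) := by
  rw [hF.polar_sum_left]
  refine prod_congr rfl fun j _ => ?_
  rw [hF.polar_comm, hF.polar_sum_left]
  exact prod_congr rfl fun l _ => hF.polar_comm _ _

def radical (hF : IsQuadraticMap F B) : AddSubgroup W :=
  hF.polar.ker

theorem mem_radical (hF : IsQuadraticMap F B) {z : W} : z ∈ hF.radical ↔ ∀ x, B x z = 1 :=
  AddMonoidHom.mem_ker.trans AddChar.eq_zero_iff

noncomputable def radicalChar (hF : IsQuadraticMap F B) : AddChar hF.radical ℂ where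
  toFun z := F z
  map_zero_eq_one' := hF.map_zero
  map_add_eq_mul' z z' := by
    rw [AddSubgroup.coe_add, hF.map_add, hF.mem_radical.1 z'.2, one_mul]

theorem comp {W' : Type*} [AddCommGroup W'] (hF : IsQuadraticMap F B) (φ : W' →+ W) :
    IsQuadraticMap (F ∘ φ) (fun x y => B (φ x) (φ y)) where
  norm_eq_one x := hF.norm_eq_one _
  map_add x y := by simp only [Function.comp_apply, φ.map_add, hF.map_add]
  map_add_left x y z := by simp only [φ.map_add, hF.map_add_left]

theorem comp_neg (hF : IsQuadraticMap F B) : IsQuadraticMap (fun x => F (-x)) B where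
  norm_eq_one x := hF.norm_eq_one (-x)
  map_add x y := by
    rw [neg_add, hF.map_add, hF.polar_neg_left, hF.polar_comm, hF.polar_neg_left, inv_inv,
      hF.polar_comm]
  map_add_left := hF.map_add_left

theorem pi {ι : Type*} [Fintype ι] (hF : IsQuadraticMap F B) :
    IsQuadraticMap (fun x : ι → W => ∏ i, F (x i)) (fun x y => ∏ i, B (x i) (y i)) where
  norm_eq_one x := by simp [hF.norm_eq_one]
  map_add x y := by simp only [Pi.add_apply, hF.map_add, prod_mul_distrib]
  map_add_left x y z := by simp only [Pi.add_apply, hF.map_add_left, prod_mul_distrib]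

theorem pow (hF : IsQuadraticMap F B) (q : ℕ) :
    IsQuadraticMap (fun x => F x ^ q) (fun x y => B (q • x) y) where
  norm_eq_one x := by simp [hF.norm_eq_one]
  map_add x y := by
    rw [hF.map_add, ← natCast_zsmul, hF.polar_zsmul_left, zpow_natCast]
    ring
  map_add_left x y z := by simp only [smul_add, hF.map_add_left]

noncomputable def divChar {G : W → ℂ} (hF : IsQuadraticMap F B) (hG : IsQuadraticMap G B) :
    AddChar W ℂ where
  toFun x := F x / G x
  map_zero_eq_one' := by rw [hF.map_zero, hG.map_zero, div_one]
  map_add_eq_mul' x y := by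
    rw [hF.map_add, hG.map_add]
    field_simp [hG.ne_zero x, hG.ne_zero y, hG.polar_ne_zero x y]

theorem eq_of_map_single_eq {ι : Type*} [Fintype ι] [DecidableEq ι] {F G : (ι → W) → ℂ}
    {B : (ι → W) → (ι → W) → ℂ} (hF : IsQuadraticMap F B) (hG : IsQuadraticMap G B)
    (h : ∀ i w, F (Pi.single i w) = G (Pi.single i w)) : F = G := by
  funext x
  have hsingle : ∀ i w, hF.divChar hG (Pi.single i w) = 1 := fun i w =>
    (div_eq_one_iff_eq (hG.ne_zero _)).2 (h i w)
  have hx : hF.divChar hG x = 1 := by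
    rw [← univ_sum_single x, AddChar.map_sum_eq_prod]
    exact prod_eq_one fun i _ => hsingle i (x i)
  exact (div_eq_one_iff_eq (hG.ne_zero x)).1 hx

/-- `x ↦ F x / F (-x)` -/
noncomputable def oddChar (hF : IsQuadraticMap F B) : AddChar W ℂ :=
  hF.divChar hF.comp_neg

theorem prod_map_neg_of_sum_eq_zero (hF : IsQuadraticMap F B) {ι : Type*} (s : Finset ι)
    (x : ι → W) (hx : ∑ i ∈ s, x i = 0) : ∏ i ∈ s, F (-x i) = ∏ i ∈ s, F (x i) := by
  have h : ∏ i ∈ s, hF.oddChar (x i) = 1 := by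
    rw [← AddChar.map_sum_eq_prod, hx, AddChar.map_zero_eq_one]
  simp only [oddChar, divChar, AddChar.coe_mk, prod_div_distrib] at h
  exact ((div_eq_one_iff_eq (prod_ne_zero_iff.2 fun i _ => hF.ne_zero _)).1 h).symm

theorem polar_self (hF : IsQuadraticMap F B) (heven : ∀ x, F (-x) = F x) (x : W) :
    B x x = F x ^ 2 := by
  have h := hF.map_add (-x) x
  rw [neg_add_cancel, hF.map_zero, hF.polar_neg_left, heven] at h
  field_simp [hF.ne_zero x, hF.polar_ne_zero x x] at h
  linear_combination h

theorem map_nsmul (hF : IsQuadraticMap F B) (heven : ∀ x, F (-x) = F x) (c : ℕ) (x : W) :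
    F (c • x) = F x ^ (c ^ 2) := by
  induction c with
  | zero => simp [hF.map_zero]
  | succ c ih =>
    rw [succ_nsmul, hF.map_add, ← natCast_zsmul, hF.polar_zsmul_left, natCast_zsmul, ih,
      hF.polar_self heven, zpow_natCast]
    ring

theorem map_zsmul (hF : IsQuadraticMap F B) (heven : ∀ x, F (-x) = F x) (c : ℤ) (x : W) :
    F (c • x) = F x ^ (c.natAbs ^ 2) := by
  obtain ⟨n, rfl | rfl⟩ := Int.eq_nat_or_neg c
  · rw [natCast_zsmul, hF.map_nsmul heven, Int.natAbs_natCast]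
  · rw [neg_smul, heven, natCast_zsmul, hF.map_nsmul heven, Int.natAbs_neg, Int.natAbs_natCast]

theorem pow_two_mul_card_eq_one [Fintype W] (hF : IsQuadraticMap F B)
    (heven : ∀ x, F (-x) = F x) (x : W) : F x ^ (2 * Fintype.card W) = 1 := by
  rw [pow_mul, ← hF.polar_self heven, ← hF.polar_apply, ← AddChar.map_nsmul_eq_pow,
    card_nsmul_eq_zero, AddChar.map_zero_eq_one]

theorem mul_conj_sum [Fintype W] (hF : IsQuadraticMap F B) [DecidablePred (· ∈ hF.radical)] :
    (∑ x, F x) * conj (∑ x, F x) = Fintype.card W * ∑ z : hF.radical, F z := by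
  calc (∑ x, F x) * conj (∑ x, F x) = ∑ y, ∑ z, F (y + z) * conj (F y) := by
        rw [map_sum, sum_mul_sum, sum_comm]
        exact sum_congr rfl fun y _ =>
          (Equiv.sum_comp (Equiv.addLeft y) (F · * conj (F y))).symm
    _ = ∑ z, F z * ∑ y, hF.polar z y := by
        rw [sum_comm]
        refine sum_congr rfl fun z _ => ?_
        rw [mul_sum]
        refine sum_congr rfl fun y _ => ?_
        rw [hF.map_add, hF.conj_eq_inv, polar_apply]
        field_simp [hF.ne_zero y]
    _ = Fintype.card W * ∑ z : hF.radical, F z := by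
        simp only [AddChar.sum_eq_ite, mul_ite, mul_zero, sum_ite, sum_const_zero, add_zero]
        rw [← sum_mul, mul_comm,
          sum_subtype _ (p := (· ∈ hF.radical)) fun z => by simp [radical]]

section IntMulVec

variable {ι : Type*} [Fintype ι] [DecidableEq ι] {M : Matrix ι ι ℤ} {q : ℕ}

theorem polar_intMulVec (hF : IsQuadraticMap F B) (hM : Mᵀ * M = q) :
    (fun x y => ∏ i, B (M.intMulVec x i) (M.intMulVec y i))
      = fun x y => ∏ i, B (q • x i) (y i) := by
  funext x y
  simp only [Matrix.intMulVec_apply, hF.polar_sum_sum, hF.polar_zsmul_zsmul]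
  rw [prod_comm]
  refine prod_congr rfl fun j _ => ?_
  rw [prod_comm]
  simp only [← hF.polar_sum_left, ← sum_smul, Matrix.sum_mul_eq_ite_of_transpose_mul_self_eq hM,
    ite_smul, zero_smul]
  rw [prod_eq_single j (fun l _ hl => by rw [if_neg hl.symm, hF.polar_zero_left]) (by simp),
    if_pos rfl, natCast_zsmul]

theorem prod_map_intMulVec_single (hF : IsQuadraticMap F B) (heven : ∀ x, F (-x) = F x)
    (hM : Mᵀ * M = q) (j : ι) (w : W) :
    ∏ i, F (M.intMulVec (Pi.single j w) i) = F w ^ q := by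
  have hdiag : ∑ i, (M i j).natAbs ^ 2 = q := by
    zify
    simpa only [sq, abs_mul_abs_self, if_true] using
      Matrix.sum_mul_eq_ite_of_transpose_mul_self_eq hM j j
  simp only [Matrix.intMulVec_apply, Pi.single_apply, smul_ite, smul_zero, sum_ite_eq',
    mem_univ, if_true, hF.map_zsmul heven, prod_pow_eq_pow_sum, hdiag]

/-- `x ↦ M x` permutes `Wⁿ` and transforms `∏ i, F (x i)` into `∏ i, F (x i) ^ q`: both are
quadratic maps with the same polar form that agree on the coordinate axes. -/
theorem sum_pow_eq_sum_pow_pow [Fintype W] (hF : IsQuadraticMap F B)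
    (heven : ∀ x, F (-x) = F x) {n : ℕ} {M : Matrix (Fin n) (Fin n) ℤ} (hM : Mᵀ * M = q)
    (hq : ∀ x : W, (q + 1) • x = 0) : (∑ x, F x) ^ n = (∑ x, F x ^ q) ^ n := by
  have hsingle : ∀ j (w : W), ((fun x => ∏ i, F (x i)) ∘ M.intMulVec) (Pi.single j w)
      = ∏ i, F ((Pi.single j w : Fin n → W) i) ^ q := fun j w => by
    rw [Function.comp_apply, hF.prod_map_intMulVec_single heven hM]
    simp [Pi.single_apply, apply_ite F, hF.map_zero]
  have hpoint := (hF.pi.comp M.intMulVec).eq_of_map_single_eq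
    (hF.polar_intMulVec hM ▸ (hF.pow q).pi) hsingle
  rw [Fintype.sum_pow, Fintype.sum_pow,
    ← (Matrix.intMulVec_bijective hM hq).sum_comp fun x => ∏ i, F (x i)]
  exact sum_congr rfl fun x _ => congrFun hpoint x

end IntMulVec

theorem conj_sum_pow_four [Fintype W] (hF : IsQuadraticMap F B)
    (heven : ∀ x, F (-x) = F x) : conj ((∑ x, F x) ^ 4) = (∑ x, F x) ^ 4 := by
  set q := 2 * Fintype.card W - 1
  have hq : q + 1 = 2 * Fintype.card W :=
    Nat.sub_add_cancel (Nat.one_le_iff_ne_zero.2 (mul_ne_zero two_ne_zero Fintype.card_ne_zero))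
  obtain ⟨M, hM⟩ := Matrix.exists_fin_four_transpose_mul_self_eq_natCast q
  have hqW : ∀ x : W, (q + 1) • x = 0 := fun x => by
    rw [hq, mul_nsmul, card_nsmul_eq_zero]
  have hconj : ∀ x, F x ^ q = conj (F x) := fun x => by
    rw [hF.conj_eq_inv]
    refine eq_inv_of_mul_eq_one_left ?_
    rw [← pow_succ, hq, hF.pow_two_mul_card_eq_one heven]
  rw [map_pow, map_sum, hF.sum_pow_eq_sum_pow_pow heven hM hqW]
  simp only [hconj]

theorem sum_eq_zero_or_pow_eight [Fintype W] (hF : IsQuadraticMap F B)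
    (heven : ∀ x, F (-x) = F x) :
    ∑ x, F x = 0 ∨ (∑ x, F x) ^ 8 = (Fintype.card W * Nat.card hF.radical : ℂ) ^ 4 := by
  classical
  have hmul := hF.mul_conj_sum
  rcases eq_or_ne hF.radicalChar 0 with hchar | hchar
  · right
    have hrad : ∑ z : hF.radical, F z = Nat.card hF.radical := by
      rw [Nat.card_eq_fintype_card, ← if_pos hchar (t := (Fintype.card hF.radical : ℂ)) (e := 0)]
      exact hF.radicalChar.sum_eq_ite
    calc (∑ x, F x) ^ 8 = ((∑ x, F x) * conj (∑ x, F x)) ^ 4 := by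
          rw [mul_pow, ← map_pow, hF.conj_sum_pow_four heven]
          ring
      _ = _ := by rw [hmul, hrad]
  · left
    have hrad : ∑ z : hF.radical, F z = 0 := AddChar.sum_eq_zero_iff_ne_zero.2 hchar
    rw [hrad, mul_zero, mul_conj, ofReal_eq_zero, normSq_eq_zero] at hmul
    exact hmul

end IsQuadraticMap

section ZeroSumTuples

variable {A : Type*} [AddCommGroup A]

def tupleSum (k : ℕ) : (Fin k → A) →+ A :=
  AddMonoidHom.mk' (fun p => ∑ i, p i) fun _ _ => sum_add_distrib

@[simp]
theorem tupleSum_apply {k : ℕ} (p : Fin k → A) : tupleSum k p = ∑ i, p i :=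
  rfl

abbrev zeroSumTuples (A : Type*) [AddCommGroup A] (k : ℕ) : AddSubgroup (Fin k → A) :=
  (tupleSum k).ker

theorem mem_zeroSumTuples {k : ℕ} {p : Fin k → A} : p ∈ zeroSumTuples A k ↔ ∑ i, p i = 0 :=
  Iff.rfl

theorem card_zeroSumTuples_mul_card {k : ℕ} (hk : 1 ≤ k) :
    Nat.card (zeroSumTuples A k) * Nat.card A = Nat.card A ^ k := by
  have hsurj : Function.Surjective (tupleSum (A := A) k) := fun a =>
    ⟨Pi.single ⟨0, hk⟩ a, by simp⟩
  calc Nat.card (zeroSumTuples A k) * Nat.card A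
      = Nat.card (zeroSumTuples A k) * (zeroSumTuples A k).index := by
        rw [AddSubgroup.index_ker, AddMonoidHom.range_eq_top.2 hsurj, AddSubgroup.card_top]
    _ = Nat.card A ^ k := by
        rw [AddSubgroup.card_mul_index, Nat.card_pi, prod_const, card_univ, Fintype.card_fin]

end ZeroSumTuples

namespace IsBicharacter

variable {A : Type*} [AddCommGroup A] [Fintype A] {χ : A → A → ℂ}

theorem norm_eq_one (hχ : IsBicharacter χ) (a b : A) : ‖χ a b‖ = 1 := hχ.1 a b

theorem comm (hχ : IsBicharacter χ) (a b : A) : χ a b = χ b a := hχ.2.1 a b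

theorem map_add_left (hχ : IsBicharacter χ) (a b c : A) : χ (a + b) c = χ a c * χ b c :=
  hχ.2.2.1 a b c

theorem injective (hχ : IsBicharacter χ) : Function.Injective fun a b => χ a b := hχ.2.2.2.1

theorem exists_eq (hχ : IsBicharacter χ) (f : A → ℂ) (hf : ∀ a, ‖f a‖ = 1)
    (hadd : ∀ a b, f (a + b) = f a * f b) : ∃ c, f = fun b => χ c b :=
  hχ.2.2.2.2 f hf hadd

theorem isQuadraticMap (hχ : IsBicharacter χ) {μ : A → ℂ} (hμ : μ ∈ QuadMaps χ) :
    IsQuadraticMap μ χ :=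
  ⟨hμ.1, hμ.2, hχ.map_add_left⟩

def addChar (hχ : IsBicharacter χ) (b : A) : AddChar A ℂ where
  toFun a := χ a b
  map_zero_eq_one' := by
    have h := hχ.map_add_left 0 0 b
    rw [add_zero] at h
    exact (mul_eq_left₀ (norm_ne_zero_iff.1 (by simp [hχ.norm_eq_one]))).1 h.symm
  map_add_eq_mul' a a' := hχ.map_add_left a a' b

@[simp]
theorem addChar_apply (hχ : IsBicharacter χ) (a b : A) : hχ.addChar b a = χ a b :=
  rfl

theorem map_zero_left (hχ : IsBicharacter χ) (b : A) : χ 0 b = 1 :=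
  (hχ.addChar b).map_zero_eq_one

theorem map_sum_left (hχ : IsBicharacter χ) {ι : Type*} (s : Finset ι) (p : ι → A) (b : A) :
    χ (∑ i ∈ s, p i) b = ∏ i ∈ s, χ (p i) b :=
  (hχ.addChar b).map_sum_eq_prod s p

theorem eq_zero_of_forall_eq_one (hχ : IsBicharacter χ) {b : A} (h : ∀ a, χ a b = 1) :
    b = 0 :=
  hχ.injective <| funext fun a => by
    show χ b a = χ 0 a
    rw [hχ.comm, h, hχ.map_zero_left]

theorem sum_apply_left [DecidableEq A] (hχ : IsBicharacter χ) (b : A) :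
    ∑ a, χ a b = if b = 0 then (Fintype.card A : ℂ) else 0 := by
  have hb : hχ.addChar b = 0 ↔ b = 0 := by
    refine ⟨fun h => hχ.eq_zero_of_forall_eq_one fun a => ?_, fun h => ?_⟩
    · simpa using congrArg (· a) h
    · ext a
      simp [h, hχ.comm a, hχ.map_zero_left]
  simpa only [hb, addChar_apply] using (hχ.addChar b).sum_eq_ite

theorem quadMaps_eq_range (hχ : IsBicharacter χ) {μ₀ : A → ℂ} (hμ₀ : μ₀ ∈ QuadMaps χ) :
    QuadMaps χ = Set.range fun c a => χ c a * μ₀ a := by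
  ext μ
  constructor
  · intro hμ
    let ψ := (hχ.isQuadraticMap hμ).divChar (hχ.isQuadraticMap hμ₀)
    obtain ⟨c, hc⟩ := hχ.exists_eq ψ
      (fun a => by simp [ψ, IsQuadraticMap.divChar, hμ.1, hμ₀.1]) ψ.map_add_eq_mul
    refine ⟨c, funext fun a => ?_⟩
    have hca : μ a / μ₀ a = χ c a := congrFun hc a
    show χ c a * μ₀ a = μ a
    rw [← hca, div_mul_cancel₀ _ ((hχ.isQuadraticMap hμ₀).ne_zero a)]
  · rintro ⟨c, rfl⟩
    refine ⟨fun a => by simp [hχ.norm_eq_one, hμ₀.1], fun a b => ?_⟩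
    show χ c (a + b) * μ₀ (a + b) = χ a b * (χ c a * μ₀ a) * (χ c b * μ₀ b)
    rw [hχ.comm c, hχ.map_add_left, hμ₀.2, hχ.comm a, hχ.comm b]
    ring

theorem injective_mul_quadMap (hχ : IsBicharacter χ) {μ₀ : A → ℂ} (hμ₀ : μ₀ ∈ QuadMaps χ) :
    Function.Injective fun c a => χ c a * μ₀ a := fun _ _ h =>
  hχ.injective <| funext fun a =>
    mul_right_cancel₀ ((hχ.isQuadraticMap hμ₀).ne_zero a) (congrFun h a)

theorem finsum_gaussSum_pow [DecidableEq A] (hχ : IsBicharacter χ) {μ₀ : A → ℂ}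
    (hμ₀ : μ₀ ∈ QuadMaps χ) (k : ℕ) :
    ∑ᶠ μ ∈ QuadMaps χ, gaussSum' μ ^ k = ((Real.sqrt (Fintype.card A) : ℂ))⁻¹ ^ k *
      (Fintype.card A * ∑ v : zeroSumTuples A k, ∏ i, μ₀ ((v : Fin k → A) i)) := by
  rw [hχ.quadMaps_eq_range hμ₀, finsum_mem_range (hχ.injective_mul_quadMap hμ₀),
    finsum_eq_sum_of_fintype]
  simp only [gaussSum', mul_pow, ← mul_sum]
  congr 1
  calc ∑ c, (∑ a, χ c a * μ₀ a) ^ k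
      = ∑ c, ∑ p : Fin k → A, χ (∑ i, p i) c * ∏ i, μ₀ (p i) := by
        refine sum_congr rfl fun c _ => ?_
        rw [Fintype.sum_pow]
        refine sum_congr rfl fun p _ => ?_
        rw [prod_mul_distrib, hχ.map_sum_left]
        exact congrArg (· * _) (prod_congr rfl fun i _ => hχ.comm c (p i))
    _ = ∑ p : Fin k → A, (∑ c, χ c (∑ i, p i)) * ∏ i, μ₀ (p i) := by
        rw [sum_comm]
        simp only [sum_mul, hχ.comm (_ : A) (∑ i, _)]
    _ = _ := by
        simp only [hχ.sum_apply_left, ite_mul, zero_mul, sum_ite, sum_const_zero, add_zero,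
          ← mul_sum]
        rw [sum_subtype _ (p := (· ∈ zeroSumTuples A k)) fun p => by simp]

theorem isQuadraticMap_zeroSumTuples (hχ : IsBicharacter χ) {μ₀ : A → ℂ}
    (hμ₀ : μ₀ ∈ QuadMaps χ) (k : ℕ) :
    IsQuadraticMap (fun v : zeroSumTuples A k => ∏ i, μ₀ ((v : Fin k → A) i))
      (fun v w => ∏ i, χ ((v : Fin k → A) i) ((w : Fin k → A) i)) :=
  (hχ.isQuadraticMap hμ₀).pi.comp (zeroSumTuples A k).subtype

theorem prod_neg_zeroSumTuples (hχ : IsBicharacter χ) {μ₀ : A → ℂ} (hμ₀ : μ₀ ∈ QuadMaps χ)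
    {k : ℕ} (v : zeroSumTuples A k) :
    ∏ i, μ₀ (((-v : zeroSumTuples A k) : Fin k → A) i) = ∏ i, μ₀ ((v : Fin k → A) i) :=
  (hχ.isQuadraticMap hμ₀).prod_map_neg_of_sum_eq_zero univ (v : Fin k → A)
    (mem_zeroSumTuples.1 v.2)

theorem prod_apply_single_left (hχ : IsBicharacter χ) {k : ℕ} (i : Fin k) (w : A)
    (z : Fin k → A) : ∏ l, χ ((Pi.single i w : Fin k → A) l) (z l) = χ w (z i) := by
  rw [Fintype.prod_eq_single i fun l hl => by rw [Pi.single_eq_of_ne hl, hχ.map_zero_left],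
    Pi.single_eq_same]

theorem forall_prod_eq_one_iff (hχ : IsBicharacter χ) {k : ℕ} (z : Fin k → A) :
    (∀ v ∈ zeroSumTuples A k, ∏ i, χ (v i) (z i) = 1) ↔ ∀ i j, z i = z j := by
  constructor
  · intro h i j
    refine sub_eq_zero.1 (hχ.eq_zero_of_forall_eq_one fun w => ?_)
    have hv : Pi.single i w - Pi.single j w ∈ zeroSumTuples A k := by
      rw [mem_zeroSumTuples]
      simp [sum_sub_distrib]
    have h1 := h _ hv
    simp only [Pi.sub_apply, ← hχ.addChar_apply, AddChar.map_sub_eq_div, prod_div_distrib] at h1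
    simp only [addChar_apply, hχ.prod_apply_single_left] at h1
    rw [hχ.comm, ← hχ.addChar_apply, AddChar.map_sub_eq_div, addChar_apply, addChar_apply,
      hχ.comm, hχ.comm (z j)]
    exact h1
  · intro h v hv
    cases k with
    | zero => simp
    | succ k =>
      simp only [h _ 0, ← hχ.map_sum_left]
      rw [mem_zeroSumTuples.1 hv, hχ.map_zero_left]

theorem card_radical_zeroSumTuples (hχ : IsBicharacter χ) {μ₀ : A → ℂ} (hμ₀ : μ₀ ∈ QuadMaps χ)
    {k : ℕ} (hk : 1 ≤ k) :
    Nat.card (hχ.isQuadraticMap_zeroSumTuples hμ₀ k).radical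
      = Nat.card {a : A // k • a = 0} := by
  set hF := hχ.isQuadraticMap_zeroSumTuples hμ₀ k
  let i₀ : Fin k := ⟨0, hk⟩
  let diagonal : {a : A // k • a = 0} → hF.radical := fun a =>
    ⟨⟨fun _ => a, by simp [a.2]⟩, hF.mem_radical.2 fun v =>
      (hχ.forall_prod_eq_one_iff (fun _ => (a : A))).2 (fun _ _ => rfl) (v : Fin k → A) v.2⟩
  refine (Nat.card_congr (Equiv.ofBijective diagonal ⟨fun a b h => ?_, fun z => ?_⟩)).symm
  · exact Subtype.ext (congrFun (congrArg (fun z : hF.radical =>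
      ((z : zeroSumTuples A k) : Fin k → A)) h) i₀)
  · set z' : Fin k → A := ((z : zeroSumTuples A k) : Fin k → A)
    have hz : ∀ i j, z' i = z' j :=
      (hχ.forall_prod_eq_one_iff _).1 fun v hv => hF.mem_radical.1 z.2 ⟨v, hv⟩
    have hsum : k • z' i₀ = 0 :=
      calc k • z' i₀ = ∑ i, z' i := by simp [hz _ i₀]
        _ = 0 := mem_zeroSumTuples.1 (z : zeroSumTuples A k).2
    exact ⟨⟨_, hsum⟩, Subtype.ext (Subtype.ext (funext fun i => (hz i i₀).symm))⟩

end IsBicharacter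

theorem pow_eight_normalized_eq_one {n m c k : ℕ} (hn : n ≠ 0) (hm : m ≠ 0)
    (hc : c * n = n ^ k) {G : ℂ} (hG : G ^ 8 = (c * m) ^ 4) :
    (((Real.sqrt n : ℂ))⁻¹ * ((Real.sqrt m : ℂ))⁻¹ * (((Real.sqrt n : ℂ))⁻¹ ^ k * (n * G))) ^ 8
      = 1 := by
  have hsq : ∀ r : ℕ, ((Real.sqrt r : ℂ)) ^ 2 = r := fun r => by
    rw [← ofReal_pow, Real.sq_sqrt (Nat.cast_nonneg _), ofReal_natCast]
  have hc0 : (c : ℂ) ≠ 0 := Nat.cast_ne_zero.2 (left_ne_zero_of_mul (hc ▸ pow_ne_zero k hn))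
  have hcC : (c : ℂ) * n = n ^ k := by exact_mod_cast hc
  calc _ = (((Real.sqrt n : ℂ) ^ 2)⁻¹) ^ 4 * (((Real.sqrt m : ℂ) ^ 2)⁻¹) ^ 4 *
        ((((Real.sqrt n : ℂ) ^ 2)⁻¹) ^ k) ^ 4 * n ^ 8 * G ^ 8 := by ring
    _ = 1 := by
      rw [hsq, hsq, hG, inv_pow _ k, ← hcC]
      field_simp

/-- For a bicharacter pair `(A, χ)` and an integer `k ≥ 1`, the number
`ζ_k(χ)` is either `0` or an 8-th complex root of unity. -/
theorem zeta_zero_or_eighth_root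
    {A : Type*} [AddCommGroup A] [Fintype A]
    (χ : A → A → ℂ) (hχ : IsBicharacter χ)
    (k : ℕ) (hk : 1 ≤ k) :
    zeta χ k = 0 ∨ (zeta χ k) ^ 8 = 1 := by
  classical
  rcases (QuadMaps χ).eq_empty_or_nonempty with hQ | ⟨μ₀, hμ₀⟩
  · left
    rw [zeta, hQ, finsum_mem_empty, mul_zero]
  have hF := hχ.isQuadraticMap_zeroSumTuples hμ₀ k
  rw [zeta, hχ.finsum_gaussSum_pow hμ₀ k]
  rcases hF.sum_eq_zero_or_pow_eight (hχ.prod_neg_zeroSumTuples hμ₀) with hG | hG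
  · left
    rw [hG, mul_zero, mul_zero, mul_zero]
  · right
    rw [hχ.card_radical_zeroSumTuples hμ₀ hk] at hG
    have hm : Nat.card {a : A // k • a = 0} ≠ 0 :=
      Nat.card_ne_zero.2 ⟨⟨⟨0, smul_zero k⟩⟩, inferInstance⟩
    refine pow_eight_normalized_eq_one Fintype.card_ne_zero hm ?_ hG
    simpa [Nat.card_eq_fintype_card] using card_zeroSumTuples_mul_card (A := A) hk
end
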